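/- arXiv:2210.03648 — 2 statements merged into one kernel-verified Lean document; each statement's English description precedes it below -/
import Mathlib

section
/- Let G be a topological gyrogroup, H a closed strongly L-subgyrogroup of G, and π : G → G/H the natural quotient mapping. Let U and V be open neighbourhoods of the neutral element 0 in G such that (⊖V)⊕V ⊆ U. Then the closure of π(V) in G/H is contained in π(U). -/
universe u

/-- A gyrogroup: a groupoid with identity, inverses, gyroautomorphisms satisfying the
left gyroassociative law and the left loop property. -/
class Gyrogroup (G : Type u) where
  add : G → G → G
  zero : G
  neg : G → G
  gyr : G → G → G → G
  zero_add : ∀ x, add zero x = x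
  add_zero : ∀ x, add x zero = x
  neg_add : ∀ x, add (neg x) x = zero
  add_neg : ∀ x, add x (neg x) = zero
  gyr_bijective : ∀ a b, Function.Bijective (gyr a b)
  gyr_add : ∀ a b x y, gyr a b (add x y) = add (gyr a b x) (gyr a b y)
  gyrassoc : ∀ a b z, add a (add b z) = add (add a b) (gyr a b z)
  loop : ∀ a b, gyr (add a b) b = gyr a b

/-- A topological gyrogroup: the operation is jointly continuous and inversion is continuous. -/
class TopologicalGyrogroup (G : Type u) [TopologicalSpace G] [Gyrogroup G] : Prop where
  continuous_add : Continuous fun p : G × G => Gyrogroup.add p.1 p.2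
  continuous_neg : Continuous (Gyrogroup.neg : G → G)

/-- `H` is a subgyrogroup of `G` (by the subgyrogroup criterion: nonempty and closed
under the operation and inversion; this is equivalent to `(H, ⊕|H)` being itself a
gyrogroup whose gyroautomorphisms are the restrictions of those of `G`). -/
structure IsSubgyrogroup {G : Type u} [Gyrogroup G] (H : Set G) : Prop where
  nonempty : H.Nonempty
  add_mem : ∀ ⦃a⦄, a ∈ H → ∀ ⦃b⦄, b ∈ H → Gyrogroup.add a b ∈ H
  neg_mem : ∀ ⦃a⦄, a ∈ H → Gyrogroup.neg a ∈ H

/-- An `L`-subgyrogroup: a subgyrogroup with `gyr[a,h](H) = H` for all `a ∈ G`, `h ∈ H`. -/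
structure IsLSubgyrogroup {G : Type u} [Gyrogroup G] (H : Set G)
    extends IsSubgyrogroup H : Prop where
  gyr_image : ∀ (a : G), ∀ ⦃h⦄, h ∈ H → Gyrogroup.gyr a h '' H = H

/-- A strongly `L`-subgyrogroup: a subgyrogroup with `gyr[a,b](H) ⊆ H` for all `a, b ∈ G`. -/
structure IsStronglyLSubgyrogroup {G : Type u} [Gyrogroup G] (H : Set G)
    extends IsSubgyrogroup H : Prop where
  gyr_image_subset : ∀ a b : G, Gyrogroup.gyr a b '' H ⊆ H

/-- The pointwise sum `A ⊕ B = {a ⊕ b : a ∈ A, b ∈ B}` of two subsets. -/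
def setAdd {G : Type u} [Gyrogroup G] (A B : Set G) : Set G :=
  Set.image2 Gyrogroup.add A B

/-- The left coset `a ⊕ H = {a ⊕ h : h ∈ H}`. -/
def lCoset {G : Type u} [Gyrogroup G] (H : Set G) (a : G) : Set G :=
  (fun h => Gyrogroup.add a h) '' H

/-- The setoid on `G` identifying points with the same left coset modulo `H`. -/
def cosetSetoid {G : Type u} [Gyrogroup G] (H : Set G) : Setoid G :=
  ⟨fun x y => lCoset H x = lCoset H y,
   ⟨fun _ => rfl, fun h => h.symm, fun h₁ h₂ => h₁.trans h₂⟩⟩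

/-- The coset space `G/H`, carrying the quotient topology: a set `O ⊆ G/H` is open
iff `π⁻¹(O)` is open in `G`. -/
abbrev GyroQuot {G : Type u} [Gyrogroup G] (H : Set G) : Type u :=
  Quotient (cosetSetoid H)

/-- The natural quotient map `π : G → G/H`, `a ↦ a ⊕ H`. -/
def qmap {G : Type u} [Gyrogroup G] (H : Set G) (a : G) : GyroQuot H :=
  Quotient.mk (cosetSetoid H) a

namespace GyroAux

variable {G : Type u} [Gyrogroup G]

local infixl:65 " ⊹ " => Gyrogroup.add
local prefix:100 "∽" => Gyrogroup.neg
local notation "𝟘" => Gyrogroup.zero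

open Gyrogroup (gyr)

theorem add_left_cancel (a : G) {x y : G} (h : a ⊹ x = a ⊹ y) : x = y := by
  have h1 : ∽a ⊹ (a ⊹ x) = ∽a ⊹ (a ⊹ y) := by rw [h]
  rw [Gyrogroup.gyrassoc, Gyrogroup.gyrassoc, Gyrogroup.neg_add, Gyrogroup.zero_add,
    Gyrogroup.zero_add] at h1
  exact (Gyrogroup.gyr_bijective (∽a) a).1 h1

theorem gyr_zero_left (b z : G) : gyr 𝟘 b z = z := by
  have := Gyrogroup.gyrassoc (𝟘 : G) b z
  rw [Gyrogroup.zero_add, Gyrogroup.zero_add] at this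
  exact (add_left_cancel b this).symm

theorem gyr_neg_self (a z : G) : gyr (∽a) a z = z := by
  have h := Gyrogroup.loop (∽a) a
  rw [Gyrogroup.neg_add] at h
  rw [← h]
  exact gyr_zero_left a z

theorem neg_add_cancel_left (a x : G) : ∽a ⊹ (a ⊹ x) = x := by
  rw [Gyrogroup.gyrassoc, Gyrogroup.neg_add, Gyrogroup.zero_add, gyr_neg_self]

theorem neg_neg (a : G) : ∽(∽a) = a := by
  apply add_left_cancel (∽a)
  rw [Gyrogroup.add_neg, Gyrogroup.neg_add]

theorem add_neg_cancel_left (a x : G) : a ⊹ (∽a ⊹ x) = x := by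
  have := neg_add_cancel_left (∽a) x
  rwa [neg_neg] at this

theorem gyr_eq (a b z : G) : gyr a b z = ∽(a ⊹ b) ⊹ (a ⊹ (b ⊹ z)) := by
  rw [Gyrogroup.gyrassoc a b z, neg_add_cancel_left]

/-- key consequence of the loop axiom -/
theorem LL (a b w : G) : (a ⊹ b) ⊹ w = ((a ⊹ b) ⊹ b) ⊹ (∽(a ⊹ b) ⊹ (a ⊹ w)) := by
  have h := Gyrogroup.gyrassoc (a ⊹ b) b (∽b ⊹ w)
  rw [add_neg_cancel_left] at h
  rw [h]
  have h2 : gyr (a ⊹ b) b (∽b ⊹ w) = gyr a b (∽b ⊹ w) := by rw [Gyrogroup.loop]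
  rw [h2, gyr_eq, add_neg_cancel_left]

/-- left Bol identity -/
theorem bol (c d p : G) : (c ⊹ (d ⊹ c)) ⊹ p = c ⊹ (d ⊹ (c ⊹ p)) := by
  have h := LL (∽d) (d ⊹ c) (d ⊹ (c ⊹ p))
  rw [neg_add_cancel_left, neg_add_cancel_left, neg_add_cancel_left] at h
  exact h.symm

/-- right division: `(q ⊕ (⊖(q ⊕ p) ⊕ q)) ⊕ p = q` -/
theorem rdiv_add (p q : G) : (q ⊹ (∽(q ⊹ p) ⊹ q)) ⊹ p = q := by
  rw [bol, Gyrogroup.neg_add, Gyrogroup.add_zero]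

theorem add_right_cancel (a : G) {x y : G} (h : x ⊹ a = y ⊹ a) : x = y := by
  have key : ∀ x : G, x = (x ⊹ a) ⊹ gyr (x ⊹ a) a (∽a) := by
    intro x
    have h1 : x = x ⊹ (a ⊹ ∽a) := by rw [Gyrogroup.add_neg, Gyrogroup.add_zero]
    rw [Gyrogroup.gyrassoc, ← Gyrogroup.loop x a] at h1
    exact h1
  rw [key x, h, ← key y]

/-- gyration inversion: `gyr a b` is inverse to `gyr b a`. -/
theorem gyr_gyr (a b z : G) : gyr a b (gyr b a z) = z := by
  set d := a ⊹ (∽(a ⊹ b) ⊹ a) with hdd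
  have hd : d ⊹ b = a := by rw [hdd]; exact rdiv_add b a
  have alp : ∀ t : G, (b ⊹ a) ⊹ t = b ⊹ (d ⊹ (b ⊹ t)) := by
    intro t
    have h := bol b d t
    rw [hd] at h
    exact h
  have alp' : ∀ s : G, ∽(b ⊹ a) ⊹ s = ∽b ⊹ (∽d ⊹ (∽b ⊹ s)) := by
    intro s
    apply add_left_cancel (b ⊹ a)
    rw [add_neg_cancel_left, alp, add_neg_cancel_left, add_neg_cancel_left,
      add_neg_cancel_left]
  have gam : ∀ t : G, (a ⊹ b) ⊹ t = a ⊹ (∽d ⊹ (a ⊹ t)) := by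
    intro t
    have h := LL d b (∽d ⊹ (a ⊹ t))
    rw [hd, add_neg_cancel_left, neg_add_cancel_left] at h
    exact h.symm
  rw [gyr_eq b a z, alp', neg_add_cancel_left, gyr_eq a b, add_neg_cancel_left, ← gam,
    neg_add_cancel_left]

section Coset

variable {H : Set G}

theorem zero_mem (hH : IsStronglyLSubgyrogroup H) : (𝟘 : G) ∈ H := by
  obtain ⟨a, ha⟩ := hH.toIsSubgyrogroup.nonempty
  have := hH.toIsSubgyrogroup.add_mem (hH.toIsSubgyrogroup.neg_mem ha) ha
  rwa [Gyrogroup.neg_add] at this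

theorem lcoset_add (hH : IsStronglyLSubgyrogroup H) {h : G} (hh : h ∈ H) (x : G) : lCoset H (x ⊹ h) = lCoset H x := by
  ext y
  constructor
  · rintro ⟨k, hk, rfl⟩
    refine ⟨h ⊹ gyr h x k, hH.toIsSubgyrogroup.add_mem hh (hH.gyr_image_subset h x ⟨k, hk, rfl⟩), ?_⟩
    show x ⊹ (h ⊹ gyr h x k) = (x ⊹ h) ⊹ k
    rw [Gyrogroup.gyrassoc, gyr_gyr]
  · rintro ⟨k, hk, rfl⟩
    refine ⟨gyr x h (∽h ⊹ k), hH.gyr_image_subset x h ⟨∽h ⊹ k, hH.toIsSubgyrogroup.add_mem (hH.toIsSubgyrogroup.neg_mem hh) hk, rfl⟩, ?_⟩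
    show (x ⊹ h) ⊹ gyr x h (∽h ⊹ k) = x ⊹ k
    rw [← Gyrogroup.gyrassoc, add_neg_cancel_left]

theorem self_mem_lcoset (hH : IsStronglyLSubgyrogroup H) (x : G) : x ∈ lCoset H x :=
  ⟨𝟘, zero_mem hH, Gyrogroup.add_zero x⟩

end Coset

section Top

variable [TopologicalSpace G] [TopologicalGyrogroup G]

theorem cont_add {α : Type u} [TopologicalSpace α] {f g : α → G} (hf : Continuous f)
    (hg : Continuous g) : Continuous fun y => f y ⊹ g y :=
  TopologicalGyrogroup.continuous_add.comp (hf.prodMk hg)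

theorem cont_neg {α : Type u} [TopologicalSpace α] {f : α → G} (hf : Continuous f) :
    Continuous fun y => ∽(f y) :=
  TopologicalGyrogroup.continuous_neg.comp hf

theorem isOpen_rimage {V : Set G} (hV : IsOpen V) (x : G) :
    IsOpen ((fun v => v ⊹ x) '' V) := by
  have hphi : Continuous fun y : G => y ⊹ (∽(y ⊹ x) ⊹ y) :=
    cont_add continuous_id
      (cont_add (cont_neg (cont_add continuous_id continuous_const)) continuous_id)
  have himg : (fun v => v ⊹ x) '' V = (fun y : G => y ⊹ (∽(y ⊹ x) ⊹ y)) ⁻¹' V := by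
    ext y
    constructor
    · rintro ⟨v, hv, rfl⟩
      have : ((v ⊹ x) ⊹ (∽((v ⊹ x) ⊹ x) ⊹ (v ⊹ x))) = v :=
        add_right_cancel x ((rdiv_add x (v ⊹ x)).trans rfl)
      show ((v ⊹ x) ⊹ (∽((v ⊹ x) ⊹ x) ⊹ (v ⊹ x))) ∈ V
      rw [this]; exact hv
    · intro hy
      exact ⟨y ⊹ (∽(y ⊹ x) ⊹ y), hy, rdiv_add x y⟩
  rw [himg]
  exact hV.preimage hphi

end Top

end GyroAux

/-- If `U, V` are open neighbourhoods of `0` with `(⊖V) ⊕ V ⊆ U`, then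
`cl(π(V)) ⊆ π(U)` in `G/H`, for a closed strongly L-subgyrogroup `H`. -/
theorem stmt_9 {G : Type u} [Gyrogroup G] [TopologicalSpace G] [TopologicalGyrogroup G]
    (H : Set G) (hH : IsStronglyLSubgyrogroup H) (hcl : IsClosed H)
    (U V : Set G) (hU : IsOpen U) (hV : IsOpen V)
    (h0U : Gyrogroup.zero ∈ U) (h0V : Gyrogroup.zero ∈ V)
    (hVU : setAdd (Gyrogroup.neg '' V) V ⊆ U) :
    closure (qmap H '' V) ⊆ qmap H '' U := by
  intro q hq
  obtain ⟨x, rfl⟩ := Quotient.exists_rep q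
  set T : Set G := (fun v => Gyrogroup.add v x) '' V with hT
  set W : Set G := ⋃ h ∈ H, (fun y => Gyrogroup.add y h) ⁻¹' T with hW
  have hWopen : IsOpen W := isOpen_biUnion fun h _ =>
    (GyroAux.isOpen_rimage hV x).preimage (GyroAux.cont_add continuous_id continuous_const)
  have hmemW : ∀ y : G, y ∈ W ↔ ∃ h, h ∈ H ∧ Gyrogroup.add y h ∈ T := by
    intro y
    rw [hW]
    simp only [Set.mem_iUnion, Set.mem_preimage, exists_prop]
  have hxW : x ∈ W := (hmemW x).2 ⟨Gyrogroup.zero, GyroAux.zero_mem hH, by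
    rw [Gyrogroup.add_zero]; exact ⟨Gyrogroup.zero, h0V, Gyrogroup.zero_add x⟩⟩
  have hsat : ∀ y y', lCoset H y = lCoset H y' → y ∈ W → y' ∈ W := by
    intro y y' he hy
    obtain ⟨h, hh, hyh⟩ := (hmemW y).1 hy
    have hmem : Gyrogroup.add y h ∈ lCoset H y' := by rw [← he]; exact ⟨h, hh, rfl⟩
    obtain ⟨k, hk, hky⟩ := hmem
    have hky' : Gyrogroup.add y' k = Gyrogroup.add y h := hky
    refine (hmemW y').2 ⟨k, hk, ?_⟩
    show Gyrogroup.add y' k ∈ T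
    rw [hky']
    exact hyh
  have hpre : qmap H ⁻¹' (qmap H '' W) = W := by
    ext y
    constructor
    · rintro ⟨w, hwW, hwy⟩
      exact hsat w y (Quotient.exact hwy) hwW
    · intro hy
      exact ⟨y, hy, rfl⟩
  have hOopen : IsOpen (qmap H '' W) := by
    have hpw : IsOpen (qmap H ⁻¹' (qmap H '' W)) := by rw [hpre]; exact hWopen
    exact isOpen_coinduced.mpr hpw
  have hqmem : qmap H x ∈ qmap H '' W := ⟨x, hxW, rfl⟩
  obtain ⟨c, hcO, hcV⟩ := mem_closure_iff.mp hq _ hOopen hqmem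
  obtain ⟨w, hwW, hwc⟩ := hcO
  obtain ⟨v, hvV, hvc⟩ := hcV
  have hvW : v ∈ W := hsat w v (Quotient.exact (hwc.trans hvc.symm)) hwW
  obtain ⟨h, hh, hvh⟩ := (hmemW v).1 hvW
  obtain ⟨v', hv', hveq⟩ := hvh
  have hx : x = Gyrogroup.add (Gyrogroup.add (Gyrogroup.neg v') v)
      (Gyrogroup.gyr (Gyrogroup.neg v') v h) := by
    have h1 : x = Gyrogroup.add (Gyrogroup.neg v') (Gyrogroup.add v' x) :=
      (GyroAux.neg_add_cancel_left v' x).symm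
    have hveq' : Gyrogroup.add v' x = Gyrogroup.add v h := hveq
    rw [hveq', Gyrogroup.gyrassoc] at h1
    exact h1
  have hu : Gyrogroup.add (Gyrogroup.neg v') v ∈ U :=
    hVU (Set.mem_image2_of_mem ⟨v', hv', rfl⟩ hvV)
  have hgyr : Gyrogroup.gyr (Gyrogroup.neg v') v h ∈ H :=
    hH.gyr_image_subset _ _ ⟨h, hh, rfl⟩
  refine ⟨_, hu, ?_⟩
  refine Quotient.sound ?_
  show lCoset H (Gyrogroup.add (Gyrogroup.neg v') v) = lCoset H x
  rw [hx]
  exact (GyroAux.lcoset_add hH hgyr _).symm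
end

section
/- Let G be a Hausdorff topological gyrogroup, H a closed strongly L-subgyrogroup of G, and P a closed symmetric subset of G (i.e. ⊖P = P) such that P contains an open neighbourhood of the neutral element 0 and the set cl(P⊕(P⊕P)) ∩ H is compact. Let π : G → G/H be the natural quotient mapping. Then the restriction f of π to P is a perfect mapping of P onto the subspace π(P) of G/H. -/
universe u

section Gyro14

open Gyrogroup Set Filter Topology

set_option linter.unusedSectionVars false

variable {G : Type u} [Gyrogroup G]

theorem gyro_left_cancel {a x y : G} (h : add a x = add a y) : x = y := by
  have h1 : add (neg a) (add a x) = add (neg a) (add a y) := by rw [h]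
  rw [gyrassoc, gyrassoc, Gyrogroup.neg_add, Gyrogroup.zero_add, Gyrogroup.zero_add] at h1
  exact (gyr_bijective (neg a) a).1 h1

theorem gyr_zero_left (b z : G) : gyr zero b z = z := by
  have := gyrassoc zero b z
  rw [Gyrogroup.zero_add, Gyrogroup.zero_add] at this
  exact (gyro_left_cancel this.symm)

theorem gyr_neg_self (a z : G) : gyr (neg a) a z = z := by
  have := Gyrogroup.loop (neg a) a
  rw [Gyrogroup.neg_add] at this
  rw [← this, gyr_zero_left]

theorem gyr_self_neg (a z : G) : gyr a (neg a) z = z := by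
  have := Gyrogroup.loop a (neg a)
  rw [Gyrogroup.add_neg] at this
  rw [← this, gyr_zero_left]

theorem gyro_neg_add_cancel_left (a b : G) : add (neg a) (add a b) = b := by
  rw [gyrassoc, Gyrogroup.neg_add, Gyrogroup.zero_add, gyr_neg_self]

theorem gyro_add_neg_cancel_left (a b : G) : add a (add (neg a) b) = b := by
  rw [gyrassoc, Gyrogroup.add_neg, Gyrogroup.zero_add, gyr_self_neg]

theorem gyro_eq_neg_of_add_eq_zero {a b : G} (h : add a b = zero) : b = neg a := by
  have := gyro_neg_add_cancel_left a b
  rw [h, Gyrogroup.add_zero] at this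
  exact this.symm

theorem gyr_zero (a b : G) : gyr a b zero = zero := by
  have h := gyr_add a b zero zero
  rw [Gyrogroup.add_zero] at h
  have h2 : add (gyr a b zero) zero = add (gyr a b zero) (gyr a b zero) := by
    rw [Gyrogroup.add_zero]; exact h
  exact (gyro_left_cancel h2).symm

theorem gyr_neg (a b x : G) : gyr a b (neg x) = neg (gyr a b x) := by
  apply gyro_eq_neg_of_add_eq_zero
  rw [← gyr_add, Gyrogroup.add_neg, gyr_zero]

theorem gyr_eq (a b z : G) : gyr a b z = add (neg (add a b)) (add a (add b z)) := by
  rw [gyrassoc a b z, gyro_neg_add_cancel_left]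

theorem gyr_comp (a b c z : G) :
    gyr a (add b c) (gyr b c z) = gyr (add a b) (gyr a b c) (gyr a b z) := by
  apply gyro_left_cancel (a := add a (add b c))
  have h1 : add (add a (add b c)) (gyr a (add b c) (gyr b c z))
      = add a (add b (add c z)) := by
    rw [← gyrassoc, ← gyrassoc]
  have h2 : add (add a (add b c)) (gyr (add a b) (gyr a b c) (gyr a b z))
      = add a (add b (add c z)) := by
    rw [gyrassoc a b c, ← gyrassoc (add a b) (gyr a b c), ← gyr_add, ← gyrassoc]
  rw [h1, h2]

theorem gyr_inv_l (b c z : G) : gyr (neg b) (add b c) (gyr b c z) = z := by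
  have := gyr_comp (neg b) b c z
  rw [Gyrogroup.neg_add, gyr_neg_self, gyr_neg_self, gyr_zero_left] at this
  exact this

theorem gyr_inv_r (b c w : G) : gyr b c (gyr (neg b) (add b c) w) = w := by
  obtain ⟨z, rfl⟩ := (gyr_bijective b c).2 w
  rw [gyr_inv_l]

/-- right subtraction: `rsub x h = x ⊕ gyr[x,h](⊖h)`, written explicitly. -/
def rsub (x h : G) : G := add x (add (neg (add x h)) x)

theorem rsub_add (u h : G) : rsub (add u h) h = u := by
  have h1 : gyr (add u h) h (neg h) = add (neg (add (add u h) h)) (add u h) := by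
    rw [gyr_eq, Gyrogroup.add_neg, Gyrogroup.add_zero]
  show add (add u h) (add (neg (add (add u h) h)) (add u h)) = u
  rw [← h1, Gyrogroup.loop, ← gyrassoc, Gyrogroup.add_neg, Gyrogroup.add_zero]

variable {H : Set G}

theorem zero_mem_of_sub (hH : IsSubgyrogroup H) : (zero : G) ∈ H := by
  obtain ⟨h, hh⟩ := hH.nonempty
  have := hH.add_mem (hH.neg_mem hh) hh
  rwa [Gyrogroup.neg_add] at this

theorem mem_lCoset_iff {a b : G} : b ∈ lCoset H a ↔ add (neg a) b ∈ H := by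
  constructor
  · rintro ⟨h, hh, rfl⟩
    show add (neg a) (add a h) ∈ H
    rwa [gyro_neg_add_cancel_left]
  · intro h
    exact ⟨add (neg a) b, h, gyro_add_neg_cancel_left a b⟩

theorem lCoset_add (hH : IsStronglyLSubgyrogroup H) {a h : G} (hh : h ∈ H) :
    lCoset H (add a h) = lCoset H a := by
  ext x
  constructor
  · rintro ⟨h', hh', rfl⟩
    refine ⟨add h (gyr (neg a) (add a h) h'), hH.add_mem hh
      (hH.gyr_image_subset _ _ ⟨h', hh', rfl⟩), ?_⟩
    show add a (add h (gyr (neg a) (add a h) h')) = add (add a h) h'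
    rw [gyrassoc, gyr_inv_r]
  · rintro ⟨k, hk, rfl⟩
    refine ⟨gyr a h (add (neg h) k),
      hH.gyr_image_subset _ _ ⟨_, hH.add_mem (hH.neg_mem hh) hk, rfl⟩, ?_⟩
    show add (add a h) (gyr a h (add (neg h) k)) = add a k
    rw [← gyrassoc, gyro_add_neg_cancel_left]

theorem qmap_eq_iff (hH : IsStronglyLSubgyrogroup H) (a b : G) :
    qmap H a = qmap H b ↔ add (neg a) b ∈ H := by
  constructor
  · intro h
    have h2 : lCoset H a = lCoset H b := Quotient.exact h
    have hb : b ∈ lCoset H b := ⟨zero, zero_mem_of_sub hH.toIsSubgyrogroup, Gyrogroup.add_zero b⟩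
    rw [← h2] at hb
    exact mem_lCoset_iff.mp hb
  · intro h
    have hb : add a (add (neg a) b) = b := gyro_add_neg_cancel_left a b
    refine Quotient.sound ?_
    show lCoset H a = lCoset H b
    rw [← hb, lCoset_add hH h]

variable [TopologicalSpace G] [TopologicalGyrogroup G]

theorem continuous_gadd : Continuous fun p : G × G => add p.1 p.2 :=
  TopologicalGyrogroup.continuous_add

theorem gyro_continuous_add_left (a : G) : Continuous fun x : G => add a x :=
  continuous_gadd.comp (continuous_const.prodMk continuous_id)

theorem gyro_continuous_add_right (a : G) : Continuous fun x : G => add x a :=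
  continuous_gadd.comp (continuous_id.prodMk continuous_const)

theorem continuous_rsub : Continuous fun p : G × G => rsub p.1 p.2 := by
  have cneg : Continuous (neg : G → G) := TopologicalGyrogroup.continuous_neg
  exact continuous_gadd.comp (continuous_fst.prodMk
    (continuous_gadd.comp ((cneg.comp continuous_gadd).prodMk continuous_fst)))

theorem gyro_image_add_left (a : G) (U : Set G) :
    (fun x => add a x) '' U = (fun x => add (neg a) x) ⁻¹' U := by
  ext y
  constructor
  · rintro ⟨x, hx, rfl⟩
    show add (neg a) (add a x) ∈ U
    rwa [gyro_neg_add_cancel_left]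
  · intro hy
    exact ⟨add (neg a) y, hy, gyro_add_neg_cancel_left a y⟩

theorem gyro_isOpenMap_add_left (a : G) : IsOpenMap fun x : G => add a x := by
  intro U hU
  rw [gyro_image_add_left]
  exact hU.preimage (gyro_continuous_add_left (neg a))


theorem continuous_qmap : Continuous (qmap H) := continuous_quotient_mk'

theorem qmap_preimage_image (hH : IsStronglyLSubgyrogroup H) (U : Set G) :
    qmap H ⁻¹' (qmap H '' U) = ⋃ h ∈ H, (fun x => add x h) ⁻¹' U := by
  ext x
  simp only [Set.mem_preimage, Set.mem_image, Set.mem_iUnion]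
  constructor
  · rintro ⟨u, hu, he⟩
    have hh : add (neg x) u ∈ H := (qmap_eq_iff hH x u).mp he.symm
    exact ⟨add (neg x) u, hh, by rwa [show add x (add (neg x) u) = u from
      gyro_add_neg_cancel_left x u]⟩
  · rintro ⟨h, hh, hxU⟩
    refine ⟨add x h, hxU, ?_⟩
    symm
    apply (qmap_eq_iff hH x (add x h)).mpr
    rwa [gyro_neg_add_cancel_left]

theorem isOpenMap_qmap (hH : IsStronglyLSubgyrogroup H) : IsOpenMap (qmap H) := by
  intro U hU
  have hpre : IsOpen (qmap H ⁻¹' (qmap H '' U)) := by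
    rw [qmap_preimage_image hH]
    exact isOpen_biUnion fun h _ => hU.preimage (gyro_continuous_add_right h)
  have hq : Topology.IsQuotientMap (qmap H) := isQuotientMap_quotient_mk'
  exact hq.isOpen_preimage.mp hpre

theorem isClosed_setAdd [T2Space G] {F K : Set G} (hF : IsClosed F) (hK : IsCompact K) :
    IsClosed (setAdd F K) := by
  classical
  refine isClosed_of_closure_subset fun p hp => ?_
  obtain ⟨U, hSU, hUp⟩ := mem_closure_iff_ultrafilter.mp hp
  have hchoice : ∀ z ∈ setAdd F K,
      ∃ vh : G × G, vh.1 ∈ F ∧ vh.2 ∈ K ∧ add vh.1 vh.2 = z := by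
    rintro z ⟨v, hv, k, hk, e⟩
    exact ⟨(v, k), hv, hk, e⟩
  set φ : G → G × G := fun z =>
    if hz : z ∈ setAdd F K then (hchoice z hz).choose else (p, p) with hφdef
  have hφ : ∀ z ∈ setAdd F K, (φ z).1 ∈ F ∧ (φ z).2 ∈ K ∧ add (φ z).1 (φ z).2 = z := by
    intro z hz
    simp only [hφdef, dif_pos hz]
    exact (hchoice z hz).choose_spec
  have hK2 : ↑(U.map fun z => (φ z).2) ≤ Filter.principal K := by
    rw [Filter.le_principal_iff, Ultrafilter.coe_map, Filter.mem_map]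
    exact Filter.mem_of_superset hSU fun z hz => (hφ z hz).2.1
  obtain ⟨h, hhK, hmap⟩ := hK.ultrafilter_le_nhds _ hK2
  have hid : Filter.Tendsto (fun z : G => z) U (nhds p) := hUp
  have htpair : Filter.Tendsto (fun z : G => (z, (φ z).2)) U (nhds (p, h)) :=
    hid.prodMk_nhds hmap
  have htend1 : Filter.Tendsto (fun z => rsub z (φ z).2) U (nhds (rsub p h)) :=
    (continuous_rsub.tendsto (p, h)).comp htpair
  have hev : ∀ᶠ z in (U : Filter G), rsub z (φ z).2 = (φ z).1 := by
    filter_upwards [hSU] with z hz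
    have h2 := rsub_add (φ z).1 (φ z).2
    rw [(hφ z hz).2.2] at h2
    exact h2
  have htend1' : Filter.Tendsto (fun z => (φ z).1) U (nhds (rsub p h)) :=
    htend1.congr' hev
  have huF : rsub p h ∈ F :=
    hF.mem_of_tendsto htend1' (Filter.mem_of_superset hSU fun z hz => (hφ z hz).1)
  have htend2 : Filter.Tendsto (fun z => add (φ z).1 (φ z).2) U
      (nhds (add (rsub p h) h)) :=
    (continuous_gadd.tendsto _).comp (htend1'.prodMk_nhds hmap)
  have htend2' : Filter.Tendsto (fun z : G => z) U (nhds (add (rsub p h) h)) :=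
    htend2.congr' (by filter_upwards [hSU] with z hz; exact (hφ z hz).2.2)
  have hpe : p = add (rsub p h) h := tendsto_nhds_unique hid htend2'
  exact ⟨rsub p h, huF, h, hhK, hpe.symm⟩

end Gyro14


/-- Let `G` be a Hausdorff topological gyrogroup, `H` a closed strongly
L-subgyrogroup, and `P` a closed symmetric subset containing an open neighbourhood of `0`
such that `cl(P ⊕ (P ⊕ P)) ∩ H` is compact. Then the restriction of `π` to `P` is a
perfect mapping of `P` onto the subspace `π(P)` of `G/H` (continuous, closed, with
compact fibers). -/
theorem stmt_14 {G : Type u} [Gyrogroup G] [TopologicalSpace G] [TopologicalGyrogroup G]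
    [T2Space G] (H : Set G) (hH : IsStronglyLSubgyrogroup H) (hHcl : IsClosed H)
    (P : Set G) (hPcl : IsClosed P) (hPsym : Gyrogroup.neg '' P = P)
    (hPnbhd : ∃ V : Set G, IsOpen V ∧ Gyrogroup.zero ∈ V ∧ V ⊆ P)
    (hcomp : IsCompact (closure (setAdd P (setAdd P P)) ∩ H))
    (f : P → (qmap H '' P : Set (GyroQuot H)))
    (hf : ∀ x : P, (f x : GyroQuot H) = qmap H x.1) :
    Continuous f ∧ IsClosedMap f ∧ ∀ y, IsCompact (f ⁻¹' {y}) := by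
  obtain ⟨V, hVo, h0V, hVP⟩ := hPnbhd
  have h0P : Gyrogroup.zero ∈ P := hVP h0V
  have hnegP : ∀ x ∈ P, Gyrogroup.neg x ∈ P := fun x hx => by
    rw [← hPsym]; exact ⟨x, hx, rfl⟩
  set K : Set G := closure (setAdd P (setAdd P P)) ∩ H with hKdef
  have hKc : IsCompact K := hcomp
  have hfeq : f = fun x : P =>
      (⟨qmap H x.1, ⟨x.1, x.2, rfl⟩⟩ : (qmap H '' P : Set (GyroQuot H))) :=
    funext fun x => Subtype.ext (hf x)
  have hcont : Continuous f := by
    rw [hfeq]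
    exact Continuous.subtype_mk (continuous_qmap.comp continuous_subtype_val) _
  refine ⟨hcont, ?_, ?_⟩
  · -- closed map
    intro F hF
    have hF' : IsClosed (Subtype.val '' F : Set G) :=
      hPcl.isClosedEmbedding_subtypeVal.isClosedMap F hF
    have hF'P : (Subtype.val '' F : Set G) ⊆ P := by
      rintro x ⟨x', _, rfl⟩; exact x'.2
    have hmain : ∀ p ∈ P, qmap H p ∈ closure (qmap H '' (Subtype.val '' F)) →
        ∃ u ∈ (Subtype.val '' F : Set G), qmap H u = qmap H p := by
      intro p hpP hpcl
      have hstep : p ∈ closure (setAdd (Subtype.val '' F) K) := by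
        rw [mem_closure_iff]
        intro O hO hpO
        have hOpV : IsOpen ((fun x => Gyrogroup.add p x) '' V) :=
          gyro_isOpenMap_add_left p V hVo
        have hO' : IsOpen (O ∩ (fun x => Gyrogroup.add p x) '' V) := hO.inter hOpV
        have hpO' : p ∈ O ∩ (fun x => Gyrogroup.add p x) '' V :=
          ⟨hpO, ⟨Gyrogroup.zero, h0V, Gyrogroup.add_zero p⟩⟩
        have h1 : ((qmap H '' (O ∩ (fun x => Gyrogroup.add p x) '' V)) ∩
            (qmap H '' (Subtype.val '' F))).Nonempty :=
          mem_closure_iff.mp hpcl _ (isOpenMap_qmap hH _ hO') ⟨p, hpO', rfl⟩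
        obtain ⟨q, ⟨o, hoO', hqo⟩, u, huF', hqu⟩ := h1
        have he : qmap H u = qmap H o := hqu.trans hqo.symm
        have hh : Gyrogroup.add (Gyrogroup.neg u) o ∈ H := (qmap_eq_iff hH u o).mp he
        obtain ⟨hoO, v, hvV, hvo⟩ := hoO'
        have hmem3 : Gyrogroup.add (Gyrogroup.neg u) o ∈ setAdd P (setAdd P P) := by
          rw [← hvo]
          exact ⟨Gyrogroup.neg u, hnegP u (hF'P huF'), Gyrogroup.add p v,
            ⟨p, hpP, v, hVP hvV, rfl⟩, rfl⟩
        exact ⟨o, hoO, u, huF', Gyrogroup.add (Gyrogroup.neg u) o,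
          ⟨subset_closure hmem3, hh⟩, gyro_add_neg_cancel_left u o⟩
      rw [(isClosed_setAdd hF' hKc).closure_eq] at hstep
      obtain ⟨u, huF', h, hhK, hup⟩ := hstep
      refine ⟨u, huF', (qmap_eq_iff hH u p).mpr ?_⟩
      rw [← hup, gyro_neg_add_cancel_left]
      exact hhK.2
    have himg : f '' F = Subtype.val ⁻¹' (closure (qmap H '' (Subtype.val '' F))) := by
      ext y
      constructor
      · rintro ⟨x, hxF, rfl⟩
        show (f x : GyroQuot H) ∈ closure (qmap H '' (Subtype.val '' F))
        rw [hf]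
        exact subset_closure ⟨x.1, ⟨x, hxF, rfl⟩, rfl⟩
      · intro hy
        obtain ⟨p, hpP, hpy⟩ := y.2
        obtain ⟨u, huF', hu⟩ := hmain p hpP (by rw [hpy]; exact hy)
        obtain ⟨x, hxF, rfl⟩ := huF'
        exact ⟨x, hxF, Subtype.ext (by rw [hf, hu, hpy])⟩
    rw [himg]
    exact isClosed_closure.preimage continuous_subtype_val
  · -- compact fibers
    intro y
    obtain ⟨p, hpP, hpy⟩ := y.2
    have hpreim : (fun x => Gyrogroup.add (Gyrogroup.neg p) x) ⁻¹' K
        = (fun k => Gyrogroup.add p k) '' K := by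
      ext x
      constructor
      · intro hx
        exact ⟨Gyrogroup.add (Gyrogroup.neg p) x, hx, gyro_add_neg_cancel_left p x⟩
      · rintro ⟨k, hk, rfl⟩
        show Gyrogroup.add (Gyrogroup.neg p) (Gyrogroup.add p k) ∈ K
        rwa [gyro_neg_add_cancel_left]
    have hS : IsCompact (P ∩ (fun x => Gyrogroup.add (Gyrogroup.neg p) x) ⁻¹' K) := by
      rw [hpreim]
      exact (hKc.image (gyro_continuous_add_left p)).inter_left hPcl
    rw [Topology.IsEmbedding.subtypeVal.isCompact_iff]
    have himg2 : Subtype.val '' (f ⁻¹' {y})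
        = P ∩ (fun x => Gyrogroup.add (Gyrogroup.neg p) x) ⁻¹' K := by
      ext z
      constructor
      · rintro ⟨x', hx', rfl⟩
        rw [Set.mem_preimage, Set.mem_singleton_iff] at hx'
        have hval : (f x' : GyroQuot H) = (y : GyroQuot H) := congrArg Subtype.val hx'
        have hfx : qmap H p = qmap H x'.1 := hpy.trans (hval.symm.trans (hf x'))
        have hHm : Gyrogroup.add (Gyrogroup.neg p) x'.1 ∈ H := (qmap_eq_iff hH p x'.1).mp hfx
        refine ⟨x'.2, ?_, hHm⟩
        exact subset_closure ⟨Gyrogroup.neg p, hnegP p hpP, Gyrogroup.add Gyrogroup.zero x'.1,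
          ⟨Gyrogroup.zero, h0P, x'.1, x'.2, rfl⟩, by rw [Gyrogroup.zero_add]⟩
      · rintro ⟨hzP, hzK⟩
        have hHm : Gyrogroup.add (Gyrogroup.neg p) z ∈ H := hzK.2
        refine ⟨⟨z, hzP⟩, ?_, rfl⟩
        rw [Set.mem_preimage, Set.mem_singleton_iff]
        apply Subtype.ext
        rw [hf]
        show qmap H z = (y : GyroQuot H)
        rw [← hpy]
        exact ((qmap_eq_iff hH p z).mpr hHm).symm
    rw [himg2]
    exact hS
end
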